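/- arXiv:2202.10214 — 2 statements merged into one kernel-verified Lean document; each statement's English description precedes it below -/
import Mathlib

section
/- Let x and y be higher-order types with disjoint leaf sets, each label occurring at most once, and let A ∈ in(x), B ∈ out(x). Then x is full-signalling from A to B if and only if the tensor x ⊗ y is full-signalling from A to B. -/
/-- Higher-order types over a type `σ` of elementary labels. -/
inductive Ty (σ : Type) : Type where
  | elem : σ → Ty σ
  | arrow : Ty σ → Ty σ → Ty σ

namespace Ty

variable {σ : Type} [DecidableEq σ]

/-- The labels occurring in a type. -/
def leaves : Ty σ → Finset σ
  | elem A => {A}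
  | arrow x y => leaves x ∪ leaves y

/-- Every label occurs at most once. -/
def NoDup : Ty σ → Prop
  | elem _ => True
  | arrow x y => NoDup x ∧ NoDup y ∧ Disjoint x.leaves y.leaves

/-- The pair (input labels, output labels) of a type. -/
def inOut : Ty σ → Finset σ × Finset σ
  | elem A => (∅, {A})
  | arrow x y => ((inOut x).2 ∪ (inOut y).1, (inOut x).1 ∪ (inOut y).2)

/-- Input labels. -/
def ins (x : Ty σ) : Finset σ := (inOut x).1

/-- Output labels. -/
def outs (x : Ty σ) : Finset σ := (inOut x).2

/-- A bit assignment `b` is all-ones on a finite set `S` of labels. -/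
def AllOnes (b : σ → Bool) (S : Finset σ) : Prop := ∀ i ∈ S, b i = true

/-- The set `D(x)` of bit assignments of a type. -/
def D : Ty σ → Set (σ → Bool)
  | elem A => {b | b A = false}
  | arrow x y => {b | b ∈ D y} ∪ {b | b ∉ D x ∧ ¬ AllOnes b x.leaves ∧ b ∉ D y}

/-- The immediate subterm relation. -/
inductive ImmSub : Ty σ → Ty σ → Prop
  | left (x z : Ty σ) : ImmSub x (arrow x z)
  | right (x z : Ty σ) : ImmSub x (arrow z x)

/-- Subterms: reflexive-transitive closure of the immediate subterm relation. -/
def Subterm {σ : Type} : Ty σ → Ty σ → Prop := Relation.ReflTransGen ImmSub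

/-- The critical set `S(x,A,B)`. -/
def Sset (x : Ty σ) (A B : σ) : Set (σ → Bool) :=
  {b | b A = false ∧ b B = false ∧ AllOnes b (x.outs \ {B})}

/-- `x` is no-signalling from `A` to `B`. -/
def NoSig (x : Ty σ) (A B : σ) : Prop := D x ∩ Sset x A B = ∅

/-- `x` is full-signalling from `A` to `B`. -/
def FullSig (x : Ty σ) (A B : σ) : Prop :=
  ¬ ∃ b : σ → Bool, ¬ AllOnes b x.leaves ∧ b ∉ D x ∧ b A = false ∧ b B = false ∧
    AllOnes b (x.ins \ {A})

/-- A pairing on `x`: a finite set of pairs (input label, output label) with all first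
components distinct and all second components distinct. -/
def IsPairing (x : Ty σ) (H : Finset (σ × σ)) : Prop :=
  (∀ p ∈ H, p.1 ∈ x.ins ∧ p.2 ∈ x.outs) ∧
  (∀ p ∈ H, ∀ q ∈ H, p.1 = q.1 → p = q) ∧
  (∀ p ∈ H, ∀ q ∈ H, p.2 = q.2 → p = q)

/-- The critical set `S(x,H)` for a pairing `H`. -/
def SsetH (x : Ty σ) (H : Finset (σ × σ)) : Set (σ → Bool) :=
  {b | AllOnes b (x.outs \ H.image Prod.snd) ∧ (∀ p ∈ H, b p.1 = b p.2) ∧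
    ∃ p ∈ H, b p.1 = false}

/-- The set `D(x ⊗ y)` for the tensor of two types with disjoint leaves. -/
def Dtensor (x y : Ty σ) : Set (σ → Bool) :=
  {b | b ∈ D x ∧ AllOnes b y.leaves} ∪ {b | b ∈ D y ∧ AllOnes b x.leaves} ∪ (D x ∩ D y)

/-- No-signalling from `A` to `B` for given data (set of bit assignments, output labels). -/
def NoSigData (D0 : Set (σ → Bool)) (outs0 : Finset σ) (A B : σ) : Prop :=
  D0 ∩ {b | b A = false ∧ b B = false ∧ AllOnes b (outs0 \ {B})} = ∅

/-- Full-signalling from `A` to `B` for given data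
(set of bit assignments, leaves, input labels). -/
def FullSigData (D0 : Set (σ → Bool)) (leaves0 ins0 : Finset σ) (A B : σ) : Prop :=
  ¬ ∃ b : σ → Bool, ¬ AllOnes b leaves0 ∧ b ∉ D0 ∧ b A = false ∧ b B = false ∧
    AllOnes b (ins0 \ {A})

/-- input and output labels are leaves -/
lemma insOuts_subset_leaves (x : Ty σ) : x.ins ⊆ x.leaves ∧ x.outs ⊆ x.leaves := by
  induction x with
  | elem A => simp [ins, outs, inOut, leaves]
  | arrow u v ihu ihv =>
    constructor <;> intro i hi <;>
      simp only [ins, outs, inOut, leaves, Finset.mem_union] at hi ⊢ <;>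
      rcases hi with h | h
    · exact Or.inl (ihu.2 h)
    · exact Or.inr (ihv.1 h)
    · exact Or.inl (ihu.1 h)
    · exact Or.inr (ihv.2 h)

lemma ins_subset_leaves (x : Ty σ) : x.ins ⊆ x.leaves := (insOuts_subset_leaves x).1
lemma outs_subset_leaves (x : Ty σ) : x.outs ⊆ x.leaves := (insOuts_subset_leaves x).2

/-- membership in `D x` depends only on the values at the leaves -/
lemma D_congr (x : Ty σ) {b b' : σ → Bool} (h : ∀ i ∈ x.leaves, b i = b' i) :
    b ∈ D x ↔ b' ∈ D x := by
  induction x with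
  | elem A => simp only [D, Set.mem_setOf_eq, h A (by simp [leaves])]
  | arrow u v ihu ihv =>
    have hu : ∀ i ∈ u.leaves, b i = b' i := fun i hi => h i (by simp [leaves, hi])
    have hv : ∀ i ∈ v.leaves, b i = b' i := fun i hi => h i (by simp [leaves, hi])
    have hall : AllOnes b u.leaves ↔ AllOnes b' u.leaves := by
      constructor <;> intro ha i hi
      · rw [← hu i hi]; exact ha i hi
      · rw [hu i hi]; exact ha i hi
    simp only [D, Set.mem_union, Set.mem_setOf_eq, ihu hu, ihv hv, hall]

/-- if `b` is all-ones on the leaves, it is not in `D x` -/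
lemma allOnes_not_mem_D (x : Ty σ) {b : σ → Bool} (h : AllOnes b x.leaves) : b ∉ D x := by
  induction x with
  | elem A => simp only [D, Set.mem_setOf_eq, h A (by simp [leaves])]; simp
  | arrow u v ihu ihv =>
    have hu : AllOnes b u.leaves := fun i hi => h i (by simp [leaves, hi])
    have hv : AllOnes b v.leaves := fun i hi => h i (by simp [leaves, hi])
    simp only [D, Set.mem_union, Set.mem_setOf_eq]
    push_neg
    refine ⟨ihv hv, fun _ h2 => absurd hu h2⟩

/-- key structural lemma about all-ones on inputs / outputs -/
lemma key_insOuts (x : Ty σ) (b : σ → Bool) :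
    (AllOnes b x.ins → b ∈ D x ∨ AllOnes b x.leaves) ∧
    (AllOnes b x.outs → b ∉ D x) := by
  induction x with
  | elem A =>
    constructor
    · intro _
      cases hA : b A with
      | false => exact Or.inl (by simp [D, hA])
      | true => exact Or.inr (by intro i hi; simp [leaves] at hi; simpa [hi])
    · intro h
      have := h A (by simp [outs, inOut])
      simp [D, this]
  | arrow u v ihu ihv =>
    have leaves_eq : (arrow u v).leaves = u.leaves ∪ v.leaves := rfl
    constructor
    · intro h
      have hou : AllOnes b u.outs := fun i hi =>
        h i (by simp only [ins, inOut, Finset.mem_union]; exact Or.inl hi)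
      have hiv : AllOnes b v.ins := fun i hi =>
        h i (by simp only [ins, inOut, Finset.mem_union]; exact Or.inr hi)
      rcases ihv.1 hiv with hv | hv
      · exact Or.inl (by simp only [D, Set.mem_union, Set.mem_setOf_eq]; exact Or.inl hv)
      · have hnv : b ∉ D v := allOnes_not_mem_D v hv
        have hnu : b ∉ D u := ihu.2 hou
        by_cases hlu : AllOnes b u.leaves
        · refine Or.inr ?_
          intro i hi
          rw [leaves_eq] at hi
          rcases Finset.mem_union.mp hi with hi | hi
          · exact hlu i hi
          · exact hv i hi
        · refine Or.inl ?_
          simp only [D, Set.mem_union, Set.mem_setOf_eq]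
          exact Or.inr ⟨hnu, hlu, hnv⟩
    · intro h
      have hiu : AllOnes b u.ins := fun i hi =>
        h i (by simp only [outs, inOut, Finset.mem_union]; exact Or.inl hi)
      have hov : AllOnes b v.outs := fun i hi =>
        h i (by simp only [outs, inOut, Finset.mem_union]; exact Or.inr hi)
      have hnv : b ∉ D v := ihv.2 hov
      simp only [D, Set.mem_union, Set.mem_setOf_eq]
      push_neg
      exact ⟨hnv, fun hnu hnlu =>
        (ihu.1 hiu).elim (fun hu => absurd hu hnu) (fun hu => absurd hu hnlu)⟩

end Ty

open Ty in
/-- `x` is full-signalling from `A` to `B` iff `x ⊗ y` is. -/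
theorem stmt11 {σ : Type} [DecidableEq σ] (x y : Ty σ) (hx : x.NoDup) (hy : y.NoDup)
    (hdisj : Disjoint x.leaves y.leaves) (A B : σ) (hA : A ∈ x.ins) (hB : B ∈ x.outs) :
    FullSig x A B ↔
      FullSigData (Dtensor x y) (x.leaves ∪ y.leaves) (x.ins ∪ y.ins) A B := by
  have hAx : A ∈ x.leaves := ins_subset_leaves x hA
  have hBx : B ∈ x.leaves := outs_subset_leaves x hB
  have hAy : A ∉ y.leaves := fun h => Finset.disjoint_left.mp hdisj hAx h
  constructor
  · -- FullSig x → FullSigData tensor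
    rintro hfs ⟨b, hno, hnD, hbA, hbB, hins⟩
    simp only [Dtensor, Set.mem_union, Set.mem_setOf_eq, Set.mem_inter_iff] at hnD
    push_neg at hnD
    have hinsx : AllOnes b (x.ins \ {A}) := fun i hi =>
      hins i (by
        rcases Finset.mem_sdiff.mp hi with ⟨h1, h2⟩
        exact Finset.mem_sdiff.mpr ⟨Finset.mem_union_left _ h1, h2⟩)
    have hiy : AllOnes b y.ins := by
      intro i hi
      refine hins i (Finset.mem_sdiff.mpr ⟨Finset.mem_union_right _ hi, ?_⟩)
      simp only [Finset.mem_singleton]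
      rintro rfl
      exact hAy (ins_subset_leaves y hi)
    rcases (key_insOuts y b).1 hiy with hDy | hly
    · -- b ∈ D y
      have hnlx : ¬ AllOnes b x.leaves := fun h => (hnD.1.2 hDy) h
      have hnDx : b ∉ D x := fun h => (hnD.2 h) hDy
      exact hfs ⟨b, hnlx, hnDx, hbA, hbB, hinsx⟩
    · -- b all-ones on y.leaves
      have hnDx : b ∉ D x := fun h => (hnD.1.1 h) hly
      have hnlx : ¬ AllOnes b x.leaves := by
        intro h
        apply hno
        intro i hi
        rcases Finset.mem_union.mp hi with hi | hi
        · exact h i hi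
        · exact hly i hi
      exact hfs ⟨b, hnlx, hnDx, hbA, hbB, hinsx⟩
  · -- FullSigData tensor → FullSig x
    rintro hft ⟨b, hno, hnD, hbA, hbB, hins⟩
    set b' : σ → Bool := fun i => if i ∈ x.leaves then b i else true with hb'
    have hagree : ∀ i ∈ x.leaves, b i = b' i := by
      intro i hi; simp [hb', hi]
    have hly : AllOnes b' y.leaves := by
      intro i hi
      have : i ∉ x.leaves := fun h => Finset.disjoint_left.mp hdisj h hi
      simp [hb', this]
    have hnDx : b' ∉ D x := fun h => hnD ((D_congr x hagree).mpr h)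
    have hnDy : b' ∉ D y := allOnes_not_mem_D y hly
    refine hft ⟨b', ?_, ?_, ?_, ?_, ?_⟩
    · intro h
      apply hno
      intro i hi
      rw [hagree i hi]
      exact h i (Finset.mem_union_left _ hi)
    · simp only [Dtensor, Set.mem_union, Set.mem_setOf_eq, Set.mem_inter_iff]
      push_neg
      exact ⟨⟨fun h => absurd h hnDx, fun h => absurd h hnDy⟩, fun h => absurd h hnDx⟩
    · rw [← hagree A hAx]; exact hbA
    · rw [← hagree B hBx]; exact hbB
    · intro i hi
      rcases Finset.mem_sdiff.mp hi with ⟨h1, h2⟩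
      rcases Finset.mem_union.mp h1 with h1 | h1
      · rw [← hagree i (ins_subset_leaves x h1)]
        exact hins i (Finset.mem_sdiff.mpr ⟨h1, h2⟩)
      · have : i ∉ x.leaves :=
          fun h => Finset.disjoint_left.mp hdisj h (ins_subset_leaves y h1)
        simp [hb', this]
end

section
/- Let x be a higher-order type in which each label occurs at most once, let A ∈ in(x) and B ∈ out(x), and let y be a subterm of x of the form arrow y₁ y₂ such that A and B occur in different sides of y (one among the leaves of y₁, the other among the leaves of y₂) and no proper subterm of y contains both A and B. Then: if A ∈ in(y), x is full-signalling from A to B; and if A ∈ out(y), x is no-signalling from A to B. -/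
namespace Ty
variable {σ : Type} [DecidableEq σ]

lemma ins_arrow (x y : Ty σ) : (arrow x y).ins = x.outs ∪ y.ins := rfl
lemma outs_arrow (x y : Ty σ) : (arrow x y).outs = x.ins ∪ y.outs := rfl
lemma leaves_arrow (x y : Ty σ) : (arrow x y).leaves = x.leaves ∪ y.leaves := rfl

lemma ins_outs_subset_leaves : ∀ x : Ty σ, x.ins ⊆ x.leaves ∧ x.outs ⊆ x.leaves
  | elem A => by simp [ins, outs, inOut, leaves]
  | arrow x y => by
      obtain ⟨ix, ox⟩ := ins_outs_subset_leaves x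
      obtain ⟨iy, oy⟩ := ins_outs_subset_leaves y
      rw [ins_arrow, outs_arrow, leaves_arrow]
      exact ⟨Finset.union_subset (ox.trans Finset.subset_union_left)
          (iy.trans Finset.subset_union_right),
        Finset.union_subset (ix.trans Finset.subset_union_left)
          (oy.trans Finset.subset_union_right)⟩

lemma disjoint_ins_outs : ∀ x : Ty σ, NoDup x → Disjoint x.ins x.outs
  | elem A, _ => by simp [ins, inOut]
  | arrow x y, h => by
      obtain ⟨ndx, ndy, hdis⟩ := h
      have hx := disjoint_ins_outs x ndx
      have hy := disjoint_ins_outs y ndy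
      obtain ⟨ix, ox⟩ := ins_outs_subset_leaves x
      obtain ⟨iy, oy⟩ := ins_outs_subset_leaves y
      rw [ins_arrow, outs_arrow, Finset.disjoint_union_left,
        Finset.disjoint_union_right, Finset.disjoint_union_right]
      exact ⟨⟨hx.symm, hdis.mono ox oy⟩, ⟨(hdis.symm.mono iy ix), hy⟩⟩

lemma mem_D_arrow {x y : Ty σ} {b : σ → Bool} :
    b ∈ D (arrow x y) ↔ b ∈ D y ∨ (b ∉ D x ∧ ¬ AllOnes b x.leaves) := by
  constructor
  · rintro (h | ⟨h1, h2, h3⟩)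
    · exact Or.inl h
    · exact Or.inr ⟨h1, h2⟩
  · rintro (h | ⟨h1, h2⟩)
    · exact Or.inl h
    · by_cases hy : b ∈ D y
      · exact Or.inl hy
      · exact Or.inr ⟨h1, h2, hy⟩

lemma allOnes_mono {b : σ → Bool} {S T : Finset σ} (h : S ⊆ T) (h2 : AllOnes b T) :
    AllOnes b S := fun i hi => h2 i (h hi)

/-- Key structural lemmas about `D`: all-ones on outputs is excluded; all-ones on
inputs but not on all leaves is included. -/
lemma D_OI (b : σ → Bool) : ∀ z : Ty σ,
    (AllOnes b z.outs → b ∉ D z) ∧ (AllOnes b z.ins → ¬ AllOnes b z.leaves → b ∈ D z)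
  | elem A => by
      constructor
      · intro h hd
        have h1 := h A (by simp [outs, inOut])
        have h2 : b A = false := hd
        rw [h2] at h1; cases h1
      · intro _ h
        have : ¬ b A = true := fun hh => h (by intro i hi; simp [leaves] at hi; subst hi; exact hh)
        show b A = false
        simpa using this
  | arrow z₁ z₂ => by
      obtain ⟨o1, i1⟩ := D_OI b z₁
      obtain ⟨o2, i2⟩ := D_OI b z₂
      constructor
      · intro h hd
        rw [outs_arrow] at h
        rcases mem_D_arrow.mp hd with h2 | ⟨hn1, hno⟩
        · exact o2 (allOnes_mono Finset.subset_union_right h) h2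
        · exact hn1 (i1 (allOnes_mono Finset.subset_union_left h) hno)
      · intro hins hno
        rw [ins_arrow] at hins
        rw [mem_D_arrow]
        by_cases h1 : AllOnes b z₁.leaves
        · have h2 : ¬ AllOnes b z₂.leaves := by
            intro h2
            exact hno (by
              intro i hi
              rcases Finset.mem_union.mp hi with h | h
              · exact h1 i h
              · exact h2 i h)
          exact Or.inl (i2 (allOnes_mono Finset.subset_union_right hins) h2)
        · exact Or.inr ⟨o1 (allOnes_mono Finset.subset_union_left hins), h1⟩

lemma leaves_subset_of_subterm {y z : Ty σ} (h : Subterm y z) : y.leaves ⊆ z.leaves := by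
  induction h with
  | refl => exact subset_rfl
  | tail h1 h2 ih =>
      cases h2 with
      | left u => exact ih.trans Finset.subset_union_left
      | right u => exact ih.trans Finset.subset_union_right

lemma noSig_iff {x : Ty σ} {A B : σ} : NoSig x A B ↔
    ∀ b, b ∈ D x → ¬ (b A = false ∧ b B = false ∧ AllOnes b (x.outs \ {B})) := by
  rw [NoSig, Set.eq_empty_iff_forall_notMem]
  constructor
  · intro h b hb hs; exact h b ⟨hb, hs⟩
  · rintro h b ⟨hb, hs⟩; exact h b hb hs

lemma notMem_of_false {b : σ → Bool} {C : σ} {S : Finset σ} (hb : b C = false)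
    (hC : C ∈ S) : ¬ AllOnes b S := fun h => by
  have := h C hC; rw [hb] at this; cases this

/-- Lifting to the right component, full-signalling. -/
lemma lift_R_FS {z : Ty σ} (u : Ty σ) {A B : σ} (hA : A ∈ z.ins)
    (h : FullSig z A B) : FullSig (arrow u z) A B := by
  rintro ⟨b, hall, hd, ha, hb, hins⟩
  refine h ⟨b, notMem_of_false ha ((ins_outs_subset_leaves z).1 hA), ?_, ha, hb, ?_⟩
  · intro hz; exact hd (Or.inl hz)
  · refine allOnes_mono ?_ hins
    rw [ins_arrow]
    exact Finset.sdiff_subset_sdiff Finset.subset_union_right subset_rfl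

/-- Lifting to the right component, no-signalling. -/
lemma lift_R_NS {z : Ty σ} (u : Ty σ) {A B : σ} (hBz : B ∈ z.leaves)
    (hdis : Disjoint u.leaves z.leaves) (h : NoSig z A B) : NoSig (arrow u z) A B := by
  rw [noSig_iff] at h ⊢
  rintro b hd ⟨ha, hb, hout⟩
  rcases mem_D_arrow.mp hd with h2 | ⟨hnu, hnall⟩
  · refine h b h2 ⟨ha, hb, allOnes_mono ?_ hout⟩
    rw [outs_arrow]
    exact Finset.sdiff_subset_sdiff Finset.subset_union_right subset_rfl
  · refine hnu ((D_OI b u).2 ?_ hnall)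
    refine allOnes_mono ?_ hout
    rw [outs_arrow]
    intro i hi
    refine Finset.mem_sdiff.mpr ⟨Finset.mem_union_left _ hi, ?_⟩
    simp only [Finset.mem_singleton]
    rintro rfl
    exact (Finset.disjoint_left.mp hdis ((ins_outs_subset_leaves u).1 hi)) hBz

/-- Lifting to the left component: no-signalling (swapped) gives full-signalling. -/
lemma lift_L_FS {z : Ty σ} (u : Ty σ) {A B : σ} (hA : A ∈ z.outs)
    (h : NoSig z B A) : FullSig (arrow z u) A B := by
  rw [noSig_iff] at h
  rintro ⟨b, hall, hd, ha, hb, hins⟩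
  have hnall : ¬ AllOnes b z.leaves :=
    notMem_of_false ha ((ins_outs_subset_leaves z).2 hA)
  have hz : b ∈ D z := by
    by_contra hnz
    exact hd (mem_D_arrow.mpr (Or.inr ⟨hnz, hnall⟩))
  refine h b hz ⟨hb, ha, allOnes_mono ?_ hins⟩
  rw [ins_arrow]
  exact Finset.sdiff_subset_sdiff Finset.subset_union_left subset_rfl

/-- Lifting to the left component: full-signalling (swapped) gives no-signalling. -/
lemma lift_L_NS {z : Ty σ} (u : Ty σ) {A B : σ} (hBz : B ∈ z.leaves)
    (hdis : Disjoint z.leaves u.leaves) (h : FullSig z B A) : NoSig (arrow z u) A B := by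
  rw [noSig_iff]
  rintro b hd ⟨ha, hb, hout⟩
  rcases mem_D_arrow.mp hd with h2 | ⟨hnz, hnall⟩
  · refine (D_OI b u).1 ?_ h2
    refine allOnes_mono ?_ hout
    rw [outs_arrow]
    intro i hi
    refine Finset.mem_sdiff.mpr ⟨Finset.mem_union_right _ hi, ?_⟩
    simp only [Finset.mem_singleton]
    rintro rfl
    exact Finset.disjoint_left.mp hdis hBz ((ins_outs_subset_leaves u).2 hi)
  · refine h ⟨b, hnall, hnz, hb, ha, allOnes_mono ?_ hout⟩
    rw [outs_arrow]
    exact Finset.sdiff_subset_sdiff Finset.subset_union_left subset_rfl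

/-- Base case: a minimal separating arrow is full-signalling. -/
lemma base_FS {y₁ y₂ : Ty σ} {A B : σ} (hnd : NoDup (arrow y₁ y₂))
    (hsplit : (A ∈ y₁.leaves ∧ B ∈ y₂.leaves) ∨ (B ∈ y₁.leaves ∧ A ∈ y₂.leaves)) :
    FullSig (arrow y₁ y₂) A B := by
  obtain ⟨nd1, nd2, hdis⟩ := hnd
  rintro ⟨b, hall, hd, ha, hb, hins⟩
  rcases hsplit with ⟨hA1, hB2⟩ | ⟨hB1, hA2⟩
  · have hAn2 : A ∉ y₂.leaves := Finset.disjoint_left.mp hdis hA1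
    have h1 : AllOnes b y₂.ins := by
      refine allOnes_mono ?_ hins
      rw [ins_arrow]
      intro i hi
      refine Finset.mem_sdiff.mpr ⟨Finset.mem_union_right _ hi, ?_⟩
      simp only [Finset.mem_singleton]
      rintro rfl
      exact hAn2 ((ins_outs_subset_leaves y₂).1 hi)
    exact hd (Or.inl ((D_OI b y₂).2 h1 (notMem_of_false hb hB2)))
  · have hAn1 : A ∉ y₁.leaves := Finset.disjoint_right.mp hdis hA2
    have h1 : AllOnes b y₁.outs := by
      refine allOnes_mono ?_ hins
      rw [ins_arrow]
      intro i hi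
      refine Finset.mem_sdiff.mpr ⟨Finset.mem_union_left _ hi, ?_⟩
      simp only [Finset.mem_singleton]
      rintro rfl
      exact hAn1 ((ins_outs_subset_leaves y₁).2 hi)
    exact hd (mem_D_arrow.mpr (Or.inr ⟨(D_OI b y₁).1 h1, notMem_of_false hb hB1⟩))

end Ty

namespace Ty
variable {σ : Type} [DecidableEq σ]

lemma main_aux {y y₁ y₂ : Ty σ} {A B : σ} (hy : y = arrow y₁ y₂)
    (hsplit : (A ∈ y₁.leaves ∧ B ∈ y₂.leaves) ∨ (B ∈ y₁.leaves ∧ A ∈ y₂.leaves)) :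
    ∀ z : Ty σ, Subterm y z → NoDup z →
      ((A ∈ z.ins ∧ B ∈ z.outs) ∨ (A ∈ z.outs ∧ B ∈ z.ins)) →
      ((A ∈ z.ins ∧ B ∈ z.outs ∧ (A ∈ y.ins → FullSig z A B) ∧ (A ∈ y.outs → NoSig z A B)) ∨
       (A ∈ z.outs ∧ B ∈ z.ins ∧ (A ∈ y.ins → NoSig z B A) ∧ (A ∈ y.outs → FullSig z B A))) := by
  subst hy
  have hAy : A ∈ (arrow y₁ y₂).leaves := by
    rcases hsplit with ⟨h, _⟩ | ⟨_, h⟩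
    · exact Finset.mem_union_left _ h
    · exact Finset.mem_union_right _ h
  have hBy : B ∈ (arrow y₁ y₂).leaves := by
    rcases hsplit with ⟨_, h⟩ | ⟨h, _⟩
    · exact Finset.mem_union_right _ h
    · exact Finset.mem_union_left _ h
  intro z hsub
  induction hsub with
  | refl =>
      intro hnd hop
      have hdio := disjoint_ins_outs _ hnd
      rcases hop with ⟨hAi, hBo⟩ | ⟨hAo, hBi⟩
      · exact Or.inl ⟨hAi, hBo, fun _ => base_FS hnd hsplit,
          fun h => absurd h (Finset.disjoint_left.mp hdio hAi)⟩
      · exact Or.inr ⟨hAo, hBi,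
          fun h => absurd hAo (Finset.disjoint_left.mp hdio h),
          fun _ => base_FS hnd hsplit.symm⟩
  | tail h1 h2 ih =>
      rename_i c w
      intro hndw hopw
      have hsubl := leaves_subset_of_subterm h1
      have hAc : A ∈ c.leaves := hsubl hAy
      have hBc : B ∈ c.leaves := hsubl hBy
      cases h2 with
      | left u =>
          obtain ⟨ndc, ndu, hdis⟩ := hndw
          have hAnu : A ∉ u.leaves := Finset.disjoint_left.mp hdis hAc
          have hBnu : B ∉ u.leaves := Finset.disjoint_left.mp hdis hBc
          have hopc : (A ∈ c.ins ∧ B ∈ c.outs) ∨ (A ∈ c.outs ∧ B ∈ c.ins) := by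
            rcases hopw with ⟨hAw, hBw⟩ | ⟨hAw, hBw⟩
            · rw [ins_arrow] at hAw
              rw [outs_arrow] at hBw
              refine Or.inr ⟨?_, ?_⟩
              · rcases Finset.mem_union.mp hAw with h | h
                · exact h
                · exact absurd ((ins_outs_subset_leaves u).1 h) hAnu
              · rcases Finset.mem_union.mp hBw with h | h
                · exact h
                · exact absurd ((ins_outs_subset_leaves u).2 h) hBnu
            · rw [outs_arrow] at hAw
              rw [ins_arrow] at hBw
              refine Or.inl ⟨?_, ?_⟩
              · rcases Finset.mem_union.mp hAw with h | h
                · exact h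
                · exact absurd ((ins_outs_subset_leaves u).2 h) hAnu
              · rcases Finset.mem_union.mp hBw with h | h
                · exact h
                · exact absurd ((ins_outs_subset_leaves u).1 h) hBnu
          rcases ih ndc hopc with ⟨hAi, hBo, f1, f2⟩ | ⟨hAo, hBi, f1, f2⟩
          · refine Or.inr ⟨?_, ?_, ?_, ?_⟩
            · rw [outs_arrow]; exact Finset.mem_union_left _ hAi
            · rw [ins_arrow]; exact Finset.mem_union_left _ hBo
            · exact fun h => lift_L_NS u hAc hdis (f1 h)
            · exact fun h => lift_L_FS u hBo (f2 h)
          · refine Or.inl ⟨?_, ?_, ?_, ?_⟩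
            · rw [ins_arrow]; exact Finset.mem_union_left _ hAo
            · rw [outs_arrow]; exact Finset.mem_union_left _ hBi
            · exact fun h => lift_L_FS u hAo (f1 h)
            · exact fun h => lift_L_NS u hBc hdis (f2 h)
      | right u =>
          obtain ⟨ndu, ndc, hdis⟩ := hndw
          have hAnu : A ∉ u.leaves := Finset.disjoint_right.mp hdis hAc
          have hBnu : B ∉ u.leaves := Finset.disjoint_right.mp hdis hBc
          have hopc : (A ∈ c.ins ∧ B ∈ c.outs) ∨ (A ∈ c.outs ∧ B ∈ c.ins) := by
            rcases hopw with ⟨hAw, hBw⟩ | ⟨hAw, hBw⟩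
            · rw [ins_arrow] at hAw
              rw [outs_arrow] at hBw
              refine Or.inl ⟨?_, ?_⟩
              · rcases Finset.mem_union.mp hAw with h | h
                · exact absurd ((ins_outs_subset_leaves u).2 h) hAnu
                · exact h
              · rcases Finset.mem_union.mp hBw with h | h
                · exact absurd ((ins_outs_subset_leaves u).1 h) hBnu
                · exact h
            · rw [outs_arrow] at hAw
              rw [ins_arrow] at hBw
              refine Or.inr ⟨?_, ?_⟩
              · rcases Finset.mem_union.mp hAw with h | h
                · exact absurd ((ins_outs_subset_leaves u).1 h) hAnu
                · exact h
              · rcases Finset.mem_union.mp hBw with h | h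
                · exact absurd ((ins_outs_subset_leaves u).2 h) hBnu
                · exact h
          rcases ih ndc hopc with ⟨hAi, hBo, f1, f2⟩ | ⟨hAo, hBi, f1, f2⟩
          · refine Or.inl ⟨?_, ?_, ?_, ?_⟩
            · rw [ins_arrow]; exact Finset.mem_union_right _ hAi
            · rw [outs_arrow]; exact Finset.mem_union_right _ hBo
            · exact fun h => lift_R_FS u hAi (f1 h)
            · exact fun h => lift_R_NS u hBc hdis (f2 h)
          · refine Or.inr ⟨?_, ?_, ?_, ?_⟩
            · rw [outs_arrow]; exact Finset.mem_union_right _ hAo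
            · rw [ins_arrow]; exact Finset.mem_union_right _ hBi
            · exact fun h => lift_R_NS u hAc hdis (f1 h)
            · exact fun h => lift_R_FS u hBi (f2 h)

end Ty

open Ty in
/-- the signalling relation from `A ∈ in(x)` to `B ∈ out(x)` is determined
by the minimal arrow subterm of `x` separating `A` and `B`. -/
theorem stmt15 {σ : Type} [DecidableEq σ] (x : Ty σ) (hx : x.NoDup)
    (A B : σ) (hA : A ∈ x.ins) (hB : B ∈ x.outs)
    (y y₁ y₂ : Ty σ) (hsub : Subterm y x) (hy : y = Ty.arrow y₁ y₂)
    (hsplit : (A ∈ y₁.leaves ∧ B ∈ y₂.leaves) ∨ (B ∈ y₁.leaves ∧ A ∈ y₂.leaves))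
    (hmin : ∀ y' : Ty σ, Subterm y' y → y' ≠ y → ¬ (A ∈ y'.leaves ∧ B ∈ y'.leaves)) :
    (A ∈ y.ins → FullSig x A B) ∧ (A ∈ y.outs → NoSig x A B) := by
  
  rcases Ty.main_aux hy hsplit x hsub hx (Or.inl ⟨hA, hB⟩) with ⟨_, _, f1, f2⟩ | ⟨hA', _, _, _⟩
  · exact ⟨f1, f2⟩
  · exact absurd hA' (Finset.disjoint_left.mp (Ty.disjoint_ins_outs x hx) hA)
end
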